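/- arXiv:1603.02458 — 5 statements merged into one kernel-verified Lean document; each statement's English description precedes it below -/
import Mathlib

section
/- (Proposition 1) Consider the time-delay reset control system obtained by connecting a linear plant P (with minimal state-space realization ẋ_p = A_p x_p + B_p u_p, y_p = C_p x_p, x_p ∈ ℝ^{n_p}) in feedback with a PI+RI controller with gains k_p, k_i and reset ratio p_r ∈ [0,1], through a delay h > 0 (u_p(t) = y_r(t), u_r(t) = −y_p(t−h)), with resets occurring at the instants of a reset sequence {t_k}. If the associated sampled-data system Ẋ(t) = Λ X(t) + Λ_d X(t−h) + Λ K X(t_k) for t ∈ (t_k, t_{k+1}], X = φ_X on [−h,0], is exponentially stable with decay rate α > 0 (for every ε > 0 there exists δ > 0 such that ‖φ_X‖_W < δ implies ‖X(t)‖ < ε e^{−αt} for all t ≥ 0, for every solution X), then the reset control system ẋ(t) = A x(t) + A_d x(t−h) between reset instants, x(t_k⁺) = A_R x(t_k) at the reset instants, x = φ on [−h,0], is exponentially stable with decay rate α (for every ε > 0 there exists δ > 0 such that ‖φ‖_W < δ implies ‖x(t)‖ < ε e^{−αt} for all t ≥ 0, for every solution x). -/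
open MeasureTheory Set Filter Matrix

noncomputable section

/-- `φ` (with density `φ'`) belongs to `W[-h,0]`: `φ` is absolutely continuous on `[-h,0]`
with square-integrable derivative `φ'`. -/
def InW {ι : Type*} [Fintype ι] (h : ℝ) (φ φ' : ℝ → EuclideanSpace ℝ ι) : Prop :=
  (∀ θ ∈ Icc (-h) (0 : ℝ), φ θ = φ (-h) + ∫ s in (-h)..θ, φ' s) ∧
    IntegrableOn φ' (Icc (-h) (0 : ℝ)) ∧
    IntegrableOn (fun s => ‖φ' s‖ ^ 2) (Icc (-h) (0 : ℝ))

/-- The norm on `W[-h,0]`: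
`‖φ‖_W = max_{θ∈[−h,0]} ‖φ(θ)‖ + (∫_{−h}^0 ‖φ̇(θ)‖² dθ)^{1/2}`. -/
def Wnorm {ι : Type*} [Fintype ι] (h : ℝ) (φ φ' : ℝ → EuclideanSpace ℝ ι) : ℝ :=
  (⨆ θ : Icc (-h) (0 : ℝ), ‖φ θ.1‖) + (∫ s in (-h)..0, ‖φ' s‖ ^ 2) ^ (1/2 : ℝ)

/-- A reset sequence: a strictly increasing sequence `{t_k}` with `t 0 = 0`,
inter-reset times in `[Tm, TM]`, and `t k → ∞`. -/
def IsResetSeq (Tm TM : ℝ) (t : ℕ → ℝ) : Prop :=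
  StrictMono t ∧ t 0 = 0 ∧ (∀ k, t (k + 1) - t k ∈ Icc Tm TM) ∧ Tendsto t atTop atTop

/-- `X` is a solution of the sampled-data system
`Ẋ(t) = Λ X(t) + Λ_d X(t−h) + Λ K X(t_k)` on `(t_k, t_{k+1}]`, with initial condition `φ`
on `[−h,0]`: `X` is continuous and satisfies the delay ODE on each inter-sample interval. -/
def IsSampledSol {ι : Type*} [Fintype ι] (Λ Λd K : Matrix ι ι ℝ) (h : ℝ) (t : ℕ → ℝ)
    (φ X : ℝ → EuclideanSpace ℝ ι) : Prop :=
  ContinuousOn X (Ici (-h)) ∧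
  (∀ θ ∈ Icc (-h) (0 : ℝ), X θ = φ θ) ∧
  (∀ k : ℕ, ∀ τ ∈ Ioo (t k) (t (k + 1)),
    HasDerivAt X
      ((WithLp.toLp 2 (Λ.mulVec (X τ) + Λd.mulVec (X (τ - h)) + (Λ * K).mulVec (X (t k))) :
        EuclideanSpace ℝ ι)) τ)

/-- `x` is a solution of the reset control system
`ẋ(t) = A x(t) + A_d x(t−h)` between reset instants, `x(t_k⁺) = A_R x(t_k)` at the reset
instants, with initial condition `φ` on `[−h,0]`: `x` is left-continuous on each
inter-reset interval, satisfies the delay ODE there, and jumps to `A_R x(t_k)` at `t_k`. -/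
def IsResetSol {ι : Type*} [Fintype ι] (A Ad AR : Matrix ι ι ℝ) (h : ℝ) (t : ℕ → ℝ)
    (φ x : ℝ → EuclideanSpace ℝ ι) : Prop :=
  (∀ θ ∈ Icc (-h) (0 : ℝ), x θ = φ θ) ∧
  (∀ k : ℕ, ContinuousOn x (Ioc (t k) (t (k + 1)))) ∧
  (∀ k : ℕ, ∀ τ ∈ Ioo (t k) (t (k + 1)),
    HasDerivAt x (WithLp.toLp 2 (A.mulVec (x τ) + Ad.mulVec (x (τ - h))) : EuclideanSpace ℝ ι) τ) ∧
  (∀ k : ℕ, Tendsto x (nhdsWithin (t k) (Ioi (t k)))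
    (nhds (WithLp.toLp 2 (AR.mulVec (x (t k))) : EuclideanSpace ℝ ι)))

/-!
Between resets the states `x_i` and `x_ri` of the PI+RI controller obey the same equation, and
the reset at `t_k` sets `x_ri` to zero while keeping `x_i`; hence `x_ri = x_i - x_i(t_k)` on
`(t_k, t_{k+1}]`. Substituting this into the dynamics shows that `X = (x_p, x_i)` is a solution of
the sampled-data system, with the projected initial condition, whose `W`-norm is no larger. The
dropped coordinate is controlled by `X` as well, `‖x(s)‖ ≤ 2 ‖X(s)‖ + ‖X(t_k)‖`, and
`t_k ≥ s - T_M` turns the decay of `X(t_k)` into decay at rate `α` in `s`.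
-/

open Topology

lemma exists_mem_Ioc_of_tendsto_atTop {α : Type*} [LinearOrder α] {t : ℕ → α}
    (htop : Tendsto t atTop atTop) {s : α} (hs : t 0 < s) : ∃ k, s ∈ Ioc (t k) (t (k + 1)) := by
  classical
  have hex : ∃ n, s ≤ t n := (htop.eventually_ge_atTop s).exists
  obtain ⟨m, hm⟩ : ∃ m, Nat.find hex = m + 1 :=
    Nat.exists_eq_succ_of_ne_zero fun h0 => (Nat.find_spec hex).not_gt (h0 ▸ hs)
  exact ⟨m, not_le.1 (Nat.find_min hex (by omega)), hm ▸ Nat.find_spec hex⟩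

lemma eqOn_Ioc_of_hasDerivAt_zero {E : Type*} [NormedAddCommGroup E] [NormedSpace ℝ E]
    {g : ℝ → E} {a b : ℝ} {c : E} (hcont : ContinuousOn g (Ioc a b))
    (hderiv : ∀ τ ∈ Ioo a b, HasDerivAt g 0 τ) (hlim : Tendsto g (𝓝[>] a) (𝓝 c)) :
    ∀ τ ∈ Ioc a b, g τ = c := by
  intro τ hτ
  have hconst : ∀ σ ∈ Ioc a τ, g τ = g σ := fun σ hσ =>
    constant_of_has_deriv_right_zero (hcont.mono fun y hy => ⟨hσ.1.trans_le hy.1, hy.2.trans hτ.2⟩)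
      (fun y hy => (hderiv y ⟨hσ.1.trans_le hy.1, hy.2.trans_le hτ.2⟩).hasDerivWithinAt)
      τ ⟨hσ.2, le_rfl⟩
  refine tendsto_nhds_unique (tendsto_const_nhds.congr' ?_) hlim
  filter_upwards [Ioc_mem_nhdsGT hτ.1] with σ hσ using hconst σ hσ

lemma continuousOn_Ici_of_continuousOn_Ioc {E : Type*} [TopologicalSpace E] {f : ℝ → E}
    {t : ℕ → ℝ} {h : ℝ} (ht0 : t 0 = 0) (htop : Tendsto t atTop atTop)
    (hinit : ContinuousOn f (Icc (-h) 0)) (hpiece : ∀ k, ContinuousOn f (Ioc (t k) (t (k + 1))))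
    (hright : ∀ k, Tendsto f (𝓝[>] t k) (𝓝 (f (t k)))) : ContinuousOn f (Ici (-h)) := by
  intro a ha
  rcases lt_or_ge 0 a with hpos | hnonpos
  · obtain ⟨k, hk⟩ := exists_mem_Ioc_of_tendsto_atTop htop (ht0 ▸ hpos)
    have hleft : ContinuousWithinAt f (Iic a) a :=
      (hpiece k a hk).mono_of_mem_nhdsWithin
        (mem_of_superset (Ioc_mem_nhdsLE hk.1) (Ioc_subset_Ioc_right hk.2))
    have hright' : ContinuousWithinAt f (Ici a) a := by
      rw [← continuousWithinAt_Ioi_iff_Ici]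
      rcases hk.2.lt_or_eq with hlt | heq
      · exact ((hpiece k).continuousAt (Ioc_mem_nhds hk.1 hlt)).continuousWithinAt
      · exact heq ▸ hright (k + 1)
    exact (continuousAt_iff_continuous_left_right.2 ⟨hleft, hright'⟩).continuousWithinAt
  rcases hnonpos.lt_or_eq with hneg | rfl
  · exact (hinit a ⟨ha, hnonpos⟩).mono_of_mem_nhdsWithin
      (inter_mem_nhdsWithin _ (Iic_mem_nhds hneg))
  · have hright0 := hright 0
    rw [ht0] at hright0
    refine ((hinit 0 ⟨ha, le_rfl⟩).union hright0).mono fun y hy => ?_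
    rcases le_or_gt y 0 with hy0 | hy0
    exacts [Or.inl ⟨hy, hy0⟩, Or.inr hy0]

namespace InW

variable {ι κ : Type*} [Fintype ι] [Fintype κ] {h : ℝ} {φ φ' : ℝ → EuclideanSpace ℝ ι}

lemma continuousOn (hφ : InW h φ φ') : ContinuousOn φ (Icc (-h) 0) :=
  (continuousOn_const.add (intervalIntegral.continuousOn_primitive hφ.2.1)).congr fun θ hθ => by
    rw [hφ.1 θ hθ, intervalIntegral.integral_of_le hθ.1]; rfl

lemma bddAbove_norm (hφ : InW h φ φ') : BddAbove (range fun θ : Icc (-h) (0 : ℝ) => ‖φ θ‖) := by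
  obtain ⟨M, hM⟩ := (isCompact_Icc.image_of_continuousOn hφ.continuousOn.norm).bddAbove
  exact ⟨M, by rintro _ ⟨θ, rfl⟩; exact hM ⟨θ, θ.2, rfl⟩⟩

lemma norm_le_Wnorm (hφ : InW h φ φ') {θ : ℝ} (hθ : θ ∈ Icc (-h) 0) : ‖φ θ‖ ≤ Wnorm h φ φ' :=
  le_add_of_le_of_nonneg (le_ciSup hφ.bddAbove_norm ⟨θ, hθ⟩) <| Real.rpow_nonneg
    (intervalIntegral.integral_nonneg (hθ.1.trans hθ.2) fun _ _ => by positivity) _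

lemma comp_clm (hφ : InW h φ φ') (L : EuclideanSpace ℝ ι →L[ℝ] EuclideanSpace ℝ κ) :
    InW h (fun θ => L (φ θ)) (fun θ => L (φ' θ)) := by
  refine ⟨fun θ hθ => ?_, L.integrable_comp hφ.2.1, ?_⟩
  · have hint : IntervalIntegrable φ' volume (-h) θ :=
      IntegrableOn.intervalIntegrable <|
        hφ.2.1.mono_set (by rw [uIcc_of_le hθ.1]; exact Icc_subset_Icc_right hθ.2)
    dsimp only
    rw [hφ.1 θ hθ, map_add, L.intervalIntegral_comp_comm hint]
  · refine (hφ.2.2.const_mul (‖L‖ ^ 2)).mono'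
      ((L.integrable_comp hφ.2.1).aestronglyMeasurable.norm.pow 2) (ae_of_all _ fun s => ?_)
    rw [Real.norm_of_nonneg (by positivity), ← mul_pow]
    exact pow_le_pow_left₀ (norm_nonneg _) (L.le_opNorm _) 2

lemma Wnorm_comp_le (hφ : InW h φ φ') (hh : 0 ≤ h)
    {L : EuclideanSpace ℝ ι →L[ℝ] EuclideanSpace ℝ κ} (hL : ∀ v, ‖L v‖ ≤ ‖v‖) :
    Wnorm h (fun θ => L (φ θ)) (fun θ => L (φ' θ)) ≤ Wnorm h φ φ' := by
  have hh' : -h ≤ 0 := neg_nonpos.2 hh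
  have : Nonempty (Icc (-h) (0 : ℝ)) := ⟨⟨0, hh', le_rfl⟩⟩
  have hsq {f : ℝ → ℝ} (hf : IntegrableOn f (Icc (-h) 0)) : IntervalIntegrable f volume (-h) 0 :=
    (uIcc_of_le hh' ▸ hf).intervalIntegrable
  refine add_le_add (ciSup_le fun θ => (hL _).trans (le_ciSup hφ.bddAbove_norm θ)) ?_
  refine Real.rpow_le_rpow (intervalIntegral.integral_nonneg hh' fun _ _ => by positivity)
    (intervalIntegral.integral_mono_on hh' (hsq (hφ.comp_clm L).2.2) (hsq hφ.2.2)
      fun s _ => pow_le_pow_left₀ (norm_nonneg _) (hL _) 2) (by norm_num)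

end InW

namespace IsResetSeq

variable {Tm TM : ℝ} {t : ℕ → ℝ}

lemma nonneg (ht : IsResetSeq Tm TM t) (k : ℕ) : 0 ≤ t k :=
  ht.2.1 ▸ ht.1.monotone (Nat.zero_le k)

lemma exists_mem_Ioc (ht : IsResetSeq Tm TM t) {s : ℝ} (hs : 0 < s) :
    ∃ k, s ∈ Ioc (t k) (t (k + 1)) :=
  exists_mem_Ioc_of_tendsto_atTop ht.2.2.2 (ht.2.1 ▸ hs)

end IsResetSeq

namespace PIRI

variable {np : ℕ} (Ap : Matrix (Fin np) (Fin np) ℝ) (Bp : Matrix (Fin np) (Fin 1) ℝ)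
  (Cp : Matrix (Fin 1) (Fin np) ℝ) (kp ki pr : ℝ)

abbrev resetA : Matrix (Fin np ⊕ Fin 2) (Fin np ⊕ Fin 2) ℝ :=
  fromBlocks Ap (Bp * !![1 - pr, pr]) 0 0

abbrev resetAd : Matrix (Fin np ⊕ Fin 2) (Fin np ⊕ Fin 2) ℝ :=
  fromBlocks (-(kp • (Bp * Cp))) 0 (-((ki • !![(1:ℝ); 1]) * Cp)) 0

abbrev resetAR (np : ℕ) : Matrix (Fin np ⊕ Fin 2) (Fin np ⊕ Fin 2) ℝ :=
  fromBlocks 1 0 0 !![(1:ℝ), 0; 0, 0]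

abbrev sampledΛ : Matrix (Fin np ⊕ Fin 1) (Fin np ⊕ Fin 1) ℝ := fromBlocks Ap Bp 0 0

abbrev sampledΛd : Matrix (Fin np ⊕ Fin 1) (Fin np ⊕ Fin 1) ℝ :=
  fromBlocks (-(kp • (Bp * Cp))) 0 (-(ki • Cp)) 0

abbrev sampledK (np : ℕ) (pr : ℝ) : Matrix (Fin np ⊕ Fin 1) (Fin np ⊕ Fin 1) ℝ :=
  fromBlocks 0 0 0 (-(pr • (1 : Matrix (Fin 1) (Fin 1) ℝ)))

/-- The projection `[I 0]` of the paper: `(x_p, x_i, x_ri) ↦ (x_p, x_i)`. -/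
def forgetReset (np : ℕ) :
    EuclideanSpace ℝ (Fin np ⊕ Fin 2) →L[ℝ] EuclideanSpace ℝ (Fin np ⊕ Fin 1) :=
  LinearMap.toContinuousLinearMap
    { toFun := fun v => WithLp.toLp 2 fun c => v (Sum.map id (fun _ => 0) c)
      map_add' := fun _ _ => rfl
      map_smul' := fun _ _ => rfl }

variable {Ap Bp Cp kp ki pr}

@[simp] lemma forgetReset_apply_inl (v : EuclideanSpace ℝ (Fin np ⊕ Fin 2)) (i : Fin np) :
    forgetReset np v (Sum.inl i) = v (Sum.inl i) := rfl

@[simp] lemma forgetReset_apply_inr (v : EuclideanSpace ℝ (Fin np ⊕ Fin 2)) (j : Fin 1) :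
    forgetReset np v (Sum.inr j) = v (Sum.inr 0) := rfl

lemma norm_forgetReset_sq (v : EuclideanSpace ℝ (Fin np ⊕ Fin 2)) :
    ‖v‖ ^ 2 = ‖forgetReset np v‖ ^ 2 + v (Sum.inr 1) ^ 2 := by
  simp only [EuclideanSpace.norm_sq_eq, Fintype.sum_sum_type, forgetReset_apply_inl,
    forgetReset_apply_inr, Fin.sum_univ_two, Fin.sum_univ_one, Real.norm_eq_abs, sq_abs]
  ring

lemma norm_forgetReset_le (v : EuclideanSpace ℝ (Fin np ⊕ Fin 2)) : ‖forgetReset np v‖ ≤ ‖v‖ :=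
  le_of_sq_le_sq (by rw [norm_forgetReset_sq v]; nlinarith) (norm_nonneg v)

lemma norm_le_norm_forgetReset_add (v : EuclideanSpace ℝ (Fin np ⊕ Fin 2)) :
    ‖v‖ ≤ ‖forgetReset np v‖ + |v (Sum.inr 1)| := by
  refine le_of_sq_le_sq ?_ (by positivity)
  rw [norm_forgetReset_sq v, add_sq, sq_abs]
  nlinarith [norm_nonneg (forgetReset np v), abs_nonneg (v (Sum.inr 1))]

lemma resetRhs_inr_one (w u : EuclideanSpace ℝ (Fin np ⊕ Fin 2)) :
    (resetA Ap Bp pr *ᵥ w + resetAd Bp Cp kp ki *ᵥ u) (Sum.inr 1) =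
      (resetA Ap Bp pr *ᵥ w + resetAd Bp Cp kp ki *ᵥ u) (Sum.inr 0) := by
  simp [Matrix.mulVec, dotProduct, Fintype.sum_sum_type]

lemma resetAR_inr_one (v : EuclideanSpace ℝ (Fin np ⊕ Fin 2)) :
    (resetAR np *ᵥ v) (Sum.inr 1) = 0 := by
  simp [Matrix.mulVec, dotProduct, Fintype.sum_sum_type, Fin.sum_univ_two]

lemma resetAR_inr_zero (v : EuclideanSpace ℝ (Fin np ⊕ Fin 2)) :
    (resetAR np *ᵥ v) (Sum.inr 0) = v (Sum.inr 0) := by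
  simp [Matrix.mulVec, dotProduct, Fintype.sum_sum_type]

lemma forgetReset_resetAR (v : EuclideanSpace ℝ (Fin np ⊕ Fin 2)) :
    forgetReset np (WithLp.toLp 2 (resetAR np *ᵥ v)) = forgetReset np v := by
  ext (i | j)
  · simp [Matrix.mulVec, dotProduct, Fintype.sum_sum_type, Matrix.one_apply]
  · simp [Matrix.mulVec, dotProduct, Fintype.sum_sum_type, Fin.sum_univ_two]

lemma forgetReset_resetRhs {w u z : EuclideanSpace ℝ (Fin np ⊕ Fin 2)}
    (hw : w (Sum.inr 1) = w (Sum.inr 0) - z (Sum.inr 0)) :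
    forgetReset np (WithLp.toLp 2 (resetA Ap Bp pr *ᵥ w + resetAd Bp Cp kp ki *ᵥ u)) =
      WithLp.toLp 2 (sampledΛ Ap Bp *ᵥ forgetReset np w + sampledΛd Bp Cp kp ki *ᵥ forgetReset np u
        + (sampledΛ Ap Bp * sampledK np pr) *ᵥ forgetReset np z) := by
  ext (i | j)
  · simp [Matrix.mulVec, dotProduct, Fintype.sum_sum_type, Matrix.mul_apply, Fin.sum_univ_two,
      hw, Matrix.one_apply]
    ring
  · obtain rfl : j = 0 := Subsingleton.elim j 0
    simp [Matrix.mulVec, Matrix.vecMul, dotProduct, Fintype.sum_sum_type, Matrix.mul_apply]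

end PIRI

namespace IsResetSol

open PIRI

variable {np : ℕ} {Ap : Matrix (Fin np) (Fin np) ℝ} {Bp : Matrix (Fin np) (Fin 1) ℝ}
  {Cp : Matrix (Fin 1) (Fin np) ℝ} {kp ki pr h : ℝ} {t : ℕ → ℝ}
  {φ x : ℝ → EuclideanSpace ℝ (Fin np ⊕ Fin 2)}

lemma resetState_eq (hx : IsResetSol (resetA Ap Bp pr) (resetAd Bp Cp kp ki) (resetAR np) h t φ x)
    (k : ℕ) : ∀ τ ∈ Ioc (t k) (t (k + 1)),
      x τ (Sum.inr 1) = x τ (Sum.inr 0) - x (t k) (Sum.inr 0) := by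
  let D : EuclideanSpace ℝ (Fin np ⊕ Fin 2) →L[ℝ] ℝ :=
    EuclideanSpace.proj (Sum.inr 1) - EuclideanSpace.proj (Sum.inr 0)
  have hDv (v : EuclideanSpace ℝ (Fin np ⊕ Fin 2)) : D v = v (Sum.inr 1) - v (Sum.inr 0) := rfl
  have hD : ∀ τ ∈ Ioc (t k) (t (k + 1)), D (x τ) = -x (t k) (Sum.inr 0) := by
    refine eqOn_Ioc_of_hasDerivAt_zero (D.continuous.comp_continuousOn (hx.2.1 k))
      (fun τ hτ => ?_) ?_
    · have hd := D.hasFDerivAt.comp_hasDerivAt τ (hx.2.2.1 k τ hτ)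
      rwa [hDv, WithLp.ofLp_toLp, resetRhs_inr_one, sub_self] at hd
    · have hl := (D.continuous.tendsto _).comp (hx.2.2.2 k)
      rwa [hDv, WithLp.ofLp_toLp, resetAR_inr_one, resetAR_inr_zero, zero_sub] at hl
  intro τ hτ
  have := hD τ hτ
  rw [hDv] at this
  linarith

lemma isSampledSol_forgetReset {Tm TM : ℝ} {φ' : ℝ → EuclideanSpace ℝ (Fin np ⊕ Fin 2)}
    (hx : IsResetSol (resetA Ap Bp pr) (resetAd Bp Cp kp ki) (resetAR np) h t φ x)
    (hφ : InW h φ φ') (ht : IsResetSeq Tm TM t) :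
    IsSampledSol (sampledΛ Ap Bp) (sampledΛd Bp Cp kp ki) (sampledK np pr) h t
      (fun θ => forgetReset np (φ θ)) (fun s => forgetReset np (x s)) := by
  have hP := (forgetReset np).continuous
  refine ⟨continuousOn_Ici_of_continuousOn_Ioc ht.2.1 ht.2.2.2 ?_
    (fun k => hP.comp_continuousOn (hx.2.1 k)) (fun k => ?_),
    fun θ hθ => congrArg (forgetReset np) (hx.1 θ hθ), fun k τ hτ => ?_⟩
  · exact (hP.comp_continuousOn hφ.continuousOn).congr fun θ hθ => by simp [hx.1 θ hθ]
  · have hl := (hP.tendsto _).comp (hx.2.2.2 k)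
    rwa [forgetReset_resetAR] at hl
  · rw [← forgetReset_resetRhs (hx.resetState_eq k τ ⟨hτ.1, hτ.2.le⟩)]
    exact (forgetReset np).hasFDerivAt.comp_hasDerivAt τ (hx.2.2.1 k τ hτ)

lemma norm_le_two_mul_norm_forgetReset_add
    (hx : IsResetSol (resetA Ap Bp pr) (resetAd Bp Cp kp ki) (resetAR np) h t φ x)
    {k : ℕ} {s : ℝ} (hs : s ∈ Ioc (t k) (t (k + 1))) :
    ‖x s‖ ≤ 2 * ‖forgetReset np (x s)‖ + ‖forgetReset np (x (t k))‖ := by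
  have hcoord (v : EuclideanSpace ℝ (Fin np ⊕ Fin 2)) : |v (Sum.inr 0)| ≤ ‖forgetReset np v‖ :=
    PiLp.norm_apply_le (forgetReset np v) (Sum.inr 0)
  calc ‖x s‖ ≤ ‖forgetReset np (x s)‖ + |x s (Sum.inr 1)| := norm_le_norm_forgetReset_add _
    _ ≤ ‖forgetReset np (x s)‖ + (|x s (Sum.inr 0)| + |x (t k) (Sum.inr 0)|) := by
      rw [hx.resetState_eq k s hs]
      gcongr
      exact abs_sub _ _
    _ ≤ 2 * ‖forgetReset np (x s)‖ + ‖forgetReset np (x (t k))‖ := by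
      linarith [hcoord (x s), hcoord (x (t k))]

end IsResetSol

open PIRI in
theorem proposition1_general
    (np : ℕ) (Ap : Matrix (Fin np) (Fin np) ℝ) (Bp : Matrix (Fin np) (Fin 1) ℝ)
    (Cp : Matrix (Fin 1) (Fin np) ℝ)
    (kp ki pr h α Tm TM : ℝ) (hh : 0 < h) (hα : 0 < α)
    (t : ℕ → ℝ) (ht : IsResetSeq Tm TM t)
    -- exponential stability of the sampled-data system (state `(x_p, x_s)`,
    -- matrices `Λ = [[A_p, B_p],[0,0]]`, `Λ_d = [[−k_p B_p C_p, 0],[−k_i C_p, 0]]`,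
    -- `K = [[0,0],[0,−p_r]]`)
    (hstab : ∀ ε > (0:ℝ), ∃ δ > (0:ℝ),
      ∀ φX φX' X : ℝ → EuclideanSpace ℝ (Fin np ⊕ Fin 1),
        InW h φX φX' → Wnorm h φX φX' < δ →
        IsSampledSol (Matrix.fromBlocks Ap Bp 0 0)
          (Matrix.fromBlocks (-(kp • (Bp * Cp))) 0 (-(ki • Cp)) 0)
          (Matrix.fromBlocks 0 0 0 (-(pr • (1 : Matrix (Fin 1) (Fin 1) ℝ)))) h t φX X →
        ∀ s : ℝ, 0 ≤ s → ‖X s‖ < ε * Real.exp (-(α * s))) :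
    -- exponential stability of the reset control system (state `(x_p, x_i, x_ri)`,
    -- matrices `A = [[A_p, B_p C_r],[0,0]]`, `A_d = [[−k_p B_p C_p, 0],[−B_r C_p, 0]]`,
    -- `A_R = diag(I, 1, 0)`, with `B_r = k_i (1,1)ᵀ`, `C_r = [1−p_r, p_r]`)
    ∀ ε > (0:ℝ), ∃ δ > (0:ℝ),
      ∀ φ φ' x : ℝ → EuclideanSpace ℝ (Fin np ⊕ Fin 2),
        InW h φ φ' → Wnorm h φ φ' < δ →
        IsResetSol (Matrix.fromBlocks Ap (Bp * !![1 - pr, pr]) 0 0)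
          (Matrix.fromBlocks (-(kp • (Bp * Cp))) 0 (-((ki • !![(1:ℝ); 1]) * Cp)) 0)
          (Matrix.fromBlocks 1 0 0 !![(1:ℝ), 0; 0, 0]) h t φ x →
        ∀ s : ℝ, 0 ≤ s → ‖x s‖ < ε * Real.exp (-(α * s)) := by
  intro ε hε
  -- `C` comes from `‖x s‖ ≤ 2 ‖X s‖ + ‖X (t k)‖` and `t k ≥ s - TM`
  set C := 2 + Real.exp (α * TM) with hC
  obtain ⟨δ, hδ, hX⟩ := hstab (ε / C) (by positivity)
  refine ⟨min δ ε, lt_min hδ hε, fun φ φ' x hφ hφδ hx s hs => ?_⟩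
  have hXs := hX _ _ _ (hφ.comp_clm (forgetReset np))
    ((hφ.Wnorm_comp_le hh.le norm_forgetReset_le).trans_lt (hφδ.trans_le (min_le_left _ _)))
    (hx.isSampledSol_forgetReset hφ ht)
  rcases hs.eq_or_lt with rfl | hpos
  -- `X` does not see `x_ri (0) = φ_ri (0)`: this is why `δ ≤ ε`
  · have h0 : (0 : ℝ) ∈ Icc (-h) 0 := ⟨by linarith, le_rfl⟩
    simpa [hx.1 0 h0] using (hφ.norm_le_Wnorm h0).trans_lt (hφδ.trans_le (min_le_right _ _))
  obtain ⟨k, hk⟩ := ht.exists_mem_Ioc hpos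
  have hdecay : Real.exp (-(α * t k)) ≤ Real.exp (α * TM) * Real.exp (-(α * s)) := by
    rw [← Real.exp_add]
    exact Real.exp_le_exp.2 (by nlinarith [(ht.2.2.1 k).2, hk.2])
  calc ‖x s‖ ≤ 2 * ‖forgetReset np (x s)‖ + ‖forgetReset np (x (t k))‖ :=
        hx.norm_le_two_mul_norm_forgetReset_add hk
    _ < 2 * (ε / C * Real.exp (-(α * s))) + ε / C * (Real.exp (α * TM) * Real.exp (-(α * s))) :=
      add_lt_add_of_lt_of_le (by linarith [hXs s hs])
        ((hXs _ (ht.nonneg k)).le.trans (by gcongr))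
    _ = ε * Real.exp (-(α * s)) := by rw [hC]; field_simp

/-- Proposition 1: if the sampled-data system associated to the PI+RI time-delay reset
control loop is exponentially stable with decay rate `α`, then the reset control system
is exponentially stable with decay rate `α`. -/
theorem proposition1
    (np : ℕ) (Ap : Matrix (Fin np) (Fin np) ℝ) (Bp : Matrix (Fin np) (Fin 1) ℝ)
    (Cp : Matrix (Fin 1) (Fin np) ℝ)
    (kp ki pr h α Tm TM : ℝ) (hpr : pr ∈ Icc (0 : ℝ) 1) (hh : 0 < h) (hα : 0 < α)
    (hTm : 0 ≤ Tm) (hTM : Tm ≤ TM)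
    (t : ℕ → ℝ) (ht : IsResetSeq Tm TM t)
    -- exponential stability of the sampled-data system (state `(x_p, x_s)`,
    -- matrices `Λ = [[A_p, B_p],[0,0]]`, `Λ_d = [[−k_p B_p C_p, 0],[−k_i C_p, 0]]`,
    -- `K = [[0,0],[0,−p_r]]`)
    (hstab : ∀ ε > (0:ℝ), ∃ δ > (0:ℝ),
      ∀ φX φX' X : ℝ → EuclideanSpace ℝ (Fin np ⊕ Fin 1),
        InW h φX φX' → Wnorm h φX φX' < δ →
        IsSampledSol (Matrix.fromBlocks Ap Bp 0 0)
          (Matrix.fromBlocks (-(kp • (Bp * Cp))) 0 (-(ki • Cp)) 0)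
          (Matrix.fromBlocks 0 0 0 (-(pr • (1 : Matrix (Fin 1) (Fin 1) ℝ)))) h t φX X →
        ∀ s : ℝ, 0 ≤ s → ‖X s‖ < ε * Real.exp (-(α * s))) :
    -- exponential stability of the reset control system (state `(x_p, x_i, x_ri)`,
    -- matrices `A = [[A_p, B_p C_r],[0,0]]`, `A_d = [[−k_p B_p C_p, 0],[−B_r C_p, 0]]`,
    -- `A_R = diag(I, 1, 0)`, with `B_r = k_i (1,1)ᵀ`, `C_r = [1−p_r, p_r]`)
    ∀ ε > (0:ℝ), ∃ δ > (0:ℝ),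
      ∀ φ φ' x : ℝ → EuclideanSpace ℝ (Fin np ⊕ Fin 2),
        InW h φ φ' → Wnorm h φ φ' < δ →
        IsResetSol (Matrix.fromBlocks Ap (Bp * !![1 - pr, pr]) 0 0)
          (Matrix.fromBlocks (-(kp • (Bp * Cp))) 0 (-((ki • !![(1:ℝ); 1]) * Cp)) 0)
          (Matrix.fromBlocks 1 0 0 !![(1:ℝ), 0; 0, 0]) h t φ x →
        ∀ s : ℝ, 0 ≤ s → ‖x s‖ < ε * Real.exp (-(α * s)) :=
  proposition1_general np Ap Bp Cp kp ki pr h α Tm TM hh hα t ht hstab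
end
end

section
/- (Proposition 2) Let α > 0, 0 ≤ 𝒯_m ≤ 𝒯_M, and consider the sampled-data system Ẋ(t) = Λ X(t) + Λ_d X(t−h) + Λ K X(t_k) for t ∈ (t_k, t_{k+1}], X = φ_X ∈ W[−h,0] on [−h,0], with reset sequence {t_k}. For a solution X, define the lifted function χ_k(τ,θ) = X(t_k + τ + θ) for τ ∈ [0,T_k], θ ∈ [−h,0]. Suppose there exist a functional V : W[−h,0] → ℝ and positive scalars μ₁, μ₂ with μ₁‖φ(0)‖² ≤ V(φ) ≤ μ₂‖φ‖²_W for all φ ∈ W[−h,0], and for each k a functional 𝒱_k(τ, χ_k) defined for τ ∈ [0,T_k], and a scalar η ≥ 0, such that: (i) e^{2αT_k} 𝒱_k(T_k, χ_k) = 𝒱_k(0, χ_k); (ii) 𝒱_k(0, χ_k) ≤ η V(χ_k(0,·)); (iii) −η V(χ_k(0,·)) ≤ e^{2ατ} 𝒱_k(τ, χ_k) for all τ ∈ [0,T_k]; (iv) the map σ ↦ e^{2ασ}( V(χ_k(σ,·)) + 𝒱_k(σ, χ_k) ) is differentiable with nonpositive derivative for all σ ∈ [0,T_k]. Then the sampled-data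 system is exponentially stable with decay rate α: for every ε > 0 there exists δ > 0 such that ‖φ_X‖_W < δ implies ‖X(t)‖ < ε e^{−αt} for all t ≥ 0, for any reset instants satisfying the reset sequence assumptions. -/
open MeasureTheory Set Filter Matrix

noncomputable section

/-! On each sampling interval the weighted sum `e^{2ασ} (V + 𝒱_k)` is nonincreasing. The looping
condition (i) removes `𝒱_k` from the balance between consecutive sampling instants, so
`e^{2α t_k} V(χ_k(0,·))` is nonincreasing in `k`, and (ii)–(iii) bound the overshoot inside an
interval by the factor `1 + 2η`. The sandwich bound on `V` turns the resulting
`e^{2αs} V(X_s) ≤ (1 + 2η) V(X_0)` into the decay estimate; applying its lower half requires every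
segment `X_s` of a solution to lie in `W[-h,0]`. -/

open Real

section Looped

lemma antitoneOn_Icc_of_hasDerivWithinAt_nonpos {f : ℝ → ℝ} {a b : ℝ}
    (hf : ∀ x ∈ Icc a b, ∃ d ≤ 0, HasDerivWithinAt f d (Icc a b) x) :
    AntitoneOn f (Icc a b) := by
  have hint : ∀ x ∈ interior (Icc a b), ∃ d ≤ 0, HasDerivAt f d x := by
    rw [interior_Icc]
    intro x hx
    obtain ⟨d, hd0, hd⟩ := hf x (Ioo_subset_Icc_self hx)
    exact ⟨d, hd0, hd.hasDerivAt (Icc_mem_nhds hx.1 hx.2)⟩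
  refine antitoneOn_of_deriv_nonpos (convex_Icc a b) (fun x hx => ?_) (fun x hx => ?_)
    (fun x hx => ?_)
  · obtain ⟨_, -, hd⟩ := hf x hx
    exact hd.continuousWithinAt
  · obtain ⟨_, -, hd⟩ := hint x hx
    exact hd.differentiableAt.differentiableWithinAt
  · obtain ⟨_, hd0, hd⟩ := hint x hx
    rwa [hd.deriv]

variable {α η a T : ℝ} {L w : ℝ → ℝ}

lemma looped_interval_bounds (hT : 0 ≤ T)
    (hanti : AntitoneOn (fun σ => exp (2 * α * σ) * (L (a + σ) + w σ)) (Icc 0 T))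
    (hloop : exp (2 * α * T) * w T = w 0) (hw0 : w 0 ≤ η * L a)
    (hw : ∀ τ ∈ Icc 0 T, -(η * L a) ≤ exp (2 * α * τ) * w τ) :
    exp (2 * α * T) * L (a + T) ≤ L a ∧
      ∀ τ ∈ Icc 0 T, exp (2 * α * τ) * L (a + τ) ≤ (1 + 2 * η) * L a := by
  have hstart : ∀ τ ∈ Icc 0 T, exp (2 * α * τ) * (L (a + τ) + w τ) ≤ L a + w 0 := by
    intro τ hτ
    simpa using hanti (left_mem_Icc.2 hT) hτ hτ.1
  refine ⟨?_, fun τ hτ => ?_⟩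
  · have := hstart T (right_mem_Icc.2 hT)
    rw [mul_add, hloop] at this
    linarith
  · have := hstart τ hτ
    have := hw τ hτ
    linarith

end Looped

lemma IsResetSeq.nonneg_s1 {Tm TM : ℝ} {t : ℕ → ℝ} (ht : IsResetSeq Tm TM t) (k : ℕ) : 0 ≤ t k :=
  ht.2.1 ▸ ht.1.monotone (Nat.zero_le k)

lemma IsResetSeq.exists_mem_Ico {Tm TM : ℝ} {t : ℕ → ℝ} (ht : IsResetSeq Tm TM t) {s : ℝ}
    (hs : 0 ≤ s) : ∃ k, s ∈ Ico (t k) (t (k + 1)) := by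
  classical
  obtain ⟨htm, ht0, -, htop⟩ := ht
  have hex : ∃ k, s < t k := (htop.eventually (eventually_gt_atTop s)).exists
  have hpos : Nat.find hex ≠ 0 := fun h0 => by
    have := Nat.find_spec hex
    rw [h0, ht0] at this
    linarith
  obtain ⟨k, hk⟩ := Nat.exists_eq_succ_of_ne_zero hpos
  have hmin := Nat.find_min hex (show k < Nat.find hex by omega)
  have hspec := Nat.find_spec hex
  rw [hk] at hspec
  exact ⟨k, not_lt.1 hmin, hspec⟩

lemma exp_mul_le_of_forall_step {α : ℝ} {L : ℝ → ℝ} {t : ℕ → ℝ}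
    (hstep : ∀ k, exp (2 * α * (t (k + 1) - t k)) * L (t (k + 1)) ≤ L (t k)) (k : ℕ) :
    exp (2 * α * t k) * L (t k) ≤ exp (2 * α * t 0) * L (t 0) := by
  induction k with
  | zero => rfl
  | succ k ih =>
    calc exp (2 * α * t (k + 1)) * L (t (k + 1))
        = exp (2 * α * t k) *
            (exp (2 * α * (t (k + 1) - t k)) * L (t (k + 1))) := by
          rw [← mul_assoc, ← exp_add]
          ring_nf
      _ ≤ exp (2 * α * t k) * L (t k) := by gcongr; exact hstep k
      _ ≤ _ := ih

section Density

variable {E : Type*} [NormedAddCommGroup E] [NormedSpace ℝ E]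

def IsL2DensityBetween (F D : ℝ → E) (a b : ℝ) : Prop :=
  IntervalIntegrable D volume a b ∧ IntervalIntegrable (fun u => ‖D u‖ ^ 2) volume a b ∧
    ∫ u in a..b, D u = F b - F a

variable {F G D D' : ℝ → E} {a b c : ℝ}

lemma IsL2DensityBetween.symm (h : IsL2DensityBetween F D a b) : IsL2DensityBetween F D b a :=
  ⟨h.1.symm, h.2.1.symm, by rw [intervalIntegral.integral_symm, h.2.2, neg_sub]⟩

lemma IsL2DensityBetween.trans (hab : IsL2DensityBetween F D a b)
    (hbc : IsL2DensityBetween F D b c) : IsL2DensityBetween F D a c :=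
  ⟨hab.1.trans hbc.1, hab.2.1.trans hbc.2.1, by
    rw [← intervalIntegral.integral_add_adjacent_intervals hab.1 hbc.1, hab.2.2, hbc.2.2,
      sub_add_sub_cancel']⟩

lemma IsL2DensityBetween.congr (h : IsL2DensityBetween F D a b) (ha : F a = G a) (hb : F b = G b)
    (hD : EqOn D D' (uIoc a b)) : IsL2DensityBetween G D' a b := by
  refine ⟨h.1.congr hD, h.2.1.congr fun u hu => by simp only [hD hu], ?_⟩
  rw [← ha, ← hb, ← h.2.2]
  exact intervalIntegral.integral_congr_ae (Eventually.of_forall fun u hu => (hD hu).symm)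

lemma InW.isL2DensityBetween {ι : Type*} [Fintype ι] {h : ℝ} {φ φ' : ℝ → EuclideanSpace ℝ ι}
    (hφ : InW h φ φ') {a b : ℝ} (ha : a ∈ Icc (-h) 0) (hb : b ∈ Icc (-h) 0) :
    IsL2DensityBetween φ φ' a b := by
  obtain ⟨hint, hφ', hφ'2⟩ := hφ
  have hsub : ∀ x ∈ Icc (-h) 0, uIcc (-h) x ⊆ Icc (-h) 0 := fun x hx =>
    uIcc_subset_Icc (left_mem_Icc.2 (hx.1.trans hx.2)) hx
  have hii : ∀ x ∈ Icc (-h) 0, IntervalIntegrable φ' volume (-h) x := fun x hx =>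
    (hφ'.mono_set (hsub x hx)).intervalIntegrable
  refine ⟨(hφ'.mono_set (uIcc_subset_Icc ha hb)).intervalIntegrable,
    (hφ'2.mono_set (uIcc_subset_Icc ha hb)).intervalIntegrable, ?_⟩
  rw [← intervalIntegral.integral_interval_sub_left (hii b hb) (hii a ha), hint a ha, hint b hb,
    add_sub_add_left_eq_sub]

lemma integrableOn_Icc_comp_add_left {G : Type*} [NormedAddCommGroup G] {f : ℝ → G} {s h : ℝ}
    (hh : 0 ≤ h) (hf : IntervalIntegrable f volume (s - h) s) :
    IntegrableOn (fun θ => f (s + θ)) (Icc (-h) 0) := by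
  have := hf.comp_add_left s
  rwa [sub_sub_cancel_left, sub_self,
    intervalIntegrable_iff_integrableOn_Icc_of_le (by linarith)] at this

lemma inW_segment_of_isL2DensityBetween {ι : Type*} [Fintype ι] {F D : ℝ → EuclideanSpace ℝ ι}
    {h m s : ℝ} (hh : 0 ≤ h) (hD : ∀ b ∈ Icc (s - h) s, IsL2DensityBetween F D m b) :
    InW h (fun θ => F (s + θ)) (fun θ => D (s + θ)) := by
  have hseg : ∀ b ∈ Icc (s - h) s, IsL2DensityBetween F D (s - h) b := fun b hb =>
    (hD _ ⟨le_rfl, by linarith⟩).symm.trans (hD b hb)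
  have hfull := hseg s ⟨by linarith, le_rfl⟩
  refine ⟨fun θ hθ => ?_, integrableOn_Icc_comp_add_left hh hfull.1,
    integrableOn_Icc_comp_add_left hh hfull.2.1⟩
  change F (s + θ) = F (s + -h) + ∫ u in -h..θ, D (s + u)
  rw [intervalIntegral.integral_comp_add_left (fun u => D u), ← sub_eq_add_neg,
    (hseg (s + θ) ⟨by linarith [hθ.1], by linarith [hθ.2]⟩).2.2, add_sub_cancel]

end Density

section SampledSol

variable {ι : Type*} [Fintype ι] {Λ Λd K : Matrix ι ι ℝ} {h Tm TM : ℝ} {t : ℕ → ℝ}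
  {φ φ' X : ℝ → EuclideanSpace ℝ ι}

lemma IsSampledSol.exists_bound_deriv (hX : IsSampledSol Λ Λd K h t φ X)
    (ht : IsResetSeq Tm TM t) (hh : 0 ≤ h) (b : ℝ) :
    ∃ M, ∀ u ∈ Ioc 0 b \ range t, HasDerivAt X (deriv X u) u ∧ ‖deriv X u‖ ≤ M := by
  let S := X '' Icc (-h) b
  have hS : IsCompact S := isCompact_Icc.image_of_continuousOn (hX.1.mono Icc_subset_Ici_self)
  have hfield : Continuous fun p : EuclideanSpace ℝ ι × EuclideanSpace ℝ ι × EuclideanSpace ℝ ι =>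
      (WithLp.toLp 2 (Λ.mulVec p.1 + Λd.mulVec p.2.1 + (Λ * K).mulVec p.2.2) :
        EuclideanSpace ℝ ι) := by
    fun_prop
  obtain ⟨M, hM⟩ := (hS.prod (hS.prod hS)).exists_bound_of_continuousOn hfield.continuousOn
  refine ⟨M, fun u ⟨hu, hut⟩ => ?_⟩
  obtain ⟨k, hk⟩ := ht.exists_mem_Ico hu.1.le
  have hd := hX.2.2 k u ⟨lt_of_le_of_ne hk.1 fun e => hut ⟨k, e⟩, hk.2⟩
  rw [hd.deriv]
  have htk := ht.nonneg_s1 k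
  have hmem : ∀ v ∈ Icc (-h) b, X v ∈ S := fun v hv => mem_image_of_mem X hv
  exact ⟨hd, hM (X u, X (u - h), X (t k)) ⟨hmem u ⟨by linarith [hu.1], hu.2⟩,
    hmem (u - h) ⟨by linarith [hu.1], by linarith [hu.2]⟩,
    hmem (t k) ⟨by linarith, hk.1.trans hu.2⟩⟩⟩

lemma IsSampledSol.isL2DensityBetween_deriv (hX : IsSampledSol Λ Λd K h t φ X)
    (ht : IsResetSeq Tm TM t) (hh : 0 ≤ h) {b : ℝ} (hb : 0 ≤ b) :
    IsL2DensityBetween X (deriv X) 0 b := by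
  obtain ⟨M, hM⟩ := hX.exists_bound_deriv ht hh b
  have hae : ∀ᵐ u ∂volume.restrict (uIoc 0 b), u ∈ Ioc 0 b \ range t := by
    rw [uIoc_of_le hb]
    filter_upwards [ae_restrict_mem measurableSet_Ioc,
      ae_restrict_of_ae ((countable_range t).ae_notMem volume)] with u h₁ h₂ using ⟨h₁, h₂⟩
  have hint : IntervalIntegrable (deriv X) volume 0 b :=
    intervalIntegrable_const.mono_fun' (measurable_deriv X).aestronglyMeasurable
      (hae.mono fun u hu => (hM u hu).2)
  refine ⟨hint, (intervalIntegrable_const (c := M ^ 2)).mono_fun'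
    ((measurable_deriv X).norm.pow_const 2).aestronglyMeasurable (hae.mono fun u hu => ?_), ?_⟩
  · change ‖‖deriv X u‖ ^ 2‖ ≤ M ^ 2
    rw [norm_pow, norm_norm]
    exact pow_le_pow_left₀ (norm_nonneg _) (hM u hu).2 2
  · exact integral_eq_of_hasDerivAt_off_countable_of_le X (deriv X) hb (countable_range t)
      (hX.1.mono (Icc_subset_Ici_self.trans (Ici_subset_Ici.2 (by linarith))))
      (fun u hu => (hM u ⟨Ioo_subset_Ioc_self hu.1, hu.2⟩).1) hint

lemma IsSampledSol.exists_inW_segment (hX : IsSampledSol Λ Λd K h t φ X)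
    (ht : IsResetSeq Tm TM t) (hh : 0 ≤ h) (hφ : InW h φ φ') {s : ℝ} (hs : 0 ≤ s) :
    ∃ ψ', InW h (fun θ => X (s + θ)) ψ' := by
  refine ⟨_, inW_segment_of_isL2DensityBetween (m := 0)
    (D := fun u => if u ≤ 0 then φ' u else deriv X u) hh fun b hb => ?_⟩
  have h0 : (0 : ℝ) ∈ Icc (-h) 0 := ⟨by linarith, le_rfl⟩
  rcases le_total b 0 with hb0 | hb0
  · have hb' : b ∈ Icc (-h) 0 := ⟨by linarith [hb.1], hb0⟩
    refine (hφ.isL2DensityBetween h0 hb').congr (hX.2.1 0 h0).symm (hX.2.1 b hb').symm ?_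
    intro u hu
    rw [uIoc_of_ge hb0] at hu
    exact (if_pos hu.2).symm
  · refine (hX.isL2DensityBetween_deriv ht hh hb0).congr rfl rfl ?_
    intro u hu
    rw [uIoc_of_le hb0] at hu
    exact (if_neg (not_le.2 hu.1)).symm

end SampledSol

section WSpace

variable {ι : Type*} [Fintype ι] {h : ℝ} {φ ψ φ' : ℝ → EuclideanSpace ℝ ι}

lemma InW.congr (hφ : InW h φ φ') (hh : 0 ≤ h) (he : EqOn φ ψ (Icc (-h) 0)) : InW h ψ φ' :=
  ⟨fun θ hθ => by rw [← he hθ, ← he ⟨le_rfl, by linarith⟩]; exact hφ.1 θ hθ, hφ.2⟩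

lemma Wnorm_congr (he : EqOn φ ψ (Icc (-h) 0)) : Wnorm h φ φ' = Wnorm h ψ φ' := by
  unfold Wnorm
  congr 1
  exact iSup_congr fun θ => by rw [he θ.2]

lemma Wnorm_nonneg (hh : 0 ≤ h) : 0 ≤ Wnorm h φ φ' :=
  add_nonneg (Real.iSup_nonneg fun _ => norm_nonneg _)
    (Real.rpow_nonneg (intervalIntegral.integral_nonneg (by linarith) fun _ _ => by positivity) _)

end WSpace

lemma exp_mul_le_of_looped {α η Tm TM : ℝ} {t : ℕ → ℝ} {L : ℝ → ℝ} {w : ℕ → ℝ → ℝ}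
    (ht : IsResetSeq Tm TM t) (hη : 0 ≤ η)
    (hloop : ∀ k, exp (2 * α * (t (k + 1) - t k)) * w k (t (k + 1) - t k) = w k 0)
    (hw0 : ∀ k, w k 0 ≤ η * L (t k))
    (hw : ∀ k, ∀ τ ∈ Icc 0 (t (k + 1) - t k), -(η * L (t k)) ≤ exp (2 * α * τ) * w k τ)
    (hderiv : ∀ k, ∀ σ ∈ Icc 0 (t (k + 1) - t k), ∃ d ≤ 0,
      HasDerivWithinAt (fun σ => exp (2 * α * σ) * (L (t k + σ) + w k σ)) d
        (Icc 0 (t (k + 1) - t k)) σ)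
    {s : ℝ} (hs : 0 ≤ s) :
    exp (2 * α * s) * L s ≤ (1 + 2 * η) * L 0 := by
  have hbounds := fun k => looped_interval_bounds (sub_nonneg.2 (ht.1.monotone k.le_succ))
    (antitoneOn_Icc_of_hasDerivWithinAt_nonpos (hderiv k)) (hloop k) (hw0 k) (hw k)
  have hstep : ∀ k, exp (2 * α * (t (k + 1) - t k)) * L (t (k + 1)) ≤ L (t k) := fun k => by
    simpa using (hbounds k).1
  have htel := exp_mul_le_of_forall_step hstep
  obtain ⟨k, hk⟩ := ht.exists_mem_Ico hs
  have hin := (hbounds k).2 (s - t k) ⟨sub_nonneg.2 hk.1, by linarith [hk.2]⟩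
  rw [add_sub_cancel] at hin
  calc exp (2 * α * s) * L s = exp (2 * α * t k) * (exp (2 * α * (s - t k)) * L s) := by
        rw [← mul_assoc, ← exp_add]
        ring_nf
    _ ≤ exp (2 * α * t k) * ((1 + 2 * η) * L (t k)) := by gcongr
    _ = (1 + 2 * η) * (exp (2 * α * t k) * L (t k)) := by ring
    _ ≤ (1 + 2 * η) * L 0 := by
        gcongr
        simpa [ht.2.1] using htel k

lemma lt_mul_exp_neg_of_exp_mul_sq_le {α s x w ε μ c : ℝ} (hμ : 0 < μ) (hc : 0 < c)
    (hw0 : 0 ≤ w) (hw : w < ε * √(μ / c)) (hxw : exp (2 * α * s) * (μ * x ^ 2) ≤ c * w ^ 2) :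
    x < ε * exp (-(α * s)) := by
  have hε : 0 < ε := pos_of_mul_pos_left (hw0.trans_lt hw) (sqrt_nonneg _)
  have hcw : c * w ^ 2 < c * (ε * √(μ / c)) ^ 2 := by gcongr
  have hc_eq : c * (ε * √(μ / c)) ^ 2 = μ * ε ^ 2 := by
    rw [mul_pow, sq_sqrt (div_pos hμ hc).le]
    field_simp
  have hexp_eq : exp (2 * α * s) * (μ * (ε * exp (-(α * s))) ^ 2) = μ * ε ^ 2 := by
    rw [mul_pow, exp_neg, show 2 * α * s = α * s + α * s by ring, exp_add]
    field_simp
  have hbound :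
      exp (2 * α * s) * (μ * x ^ 2) < exp (2 * α * s) * (μ * (ε * exp (-(α * s))) ^ 2) := by
    rw [hexp_eq, ← hc_eq]
    exact hxw.trans_lt hcw
  have hsq := lt_of_mul_lt_mul_left (lt_of_mul_lt_mul_left hbound (exp_pos _).le) hμ.le
  exact lt_of_pow_lt_pow_left₀ 2 (by positivity) hsq

theorem proposition2_general
    (n : ℕ) (Λ Λd K : Matrix (Fin n) (Fin n) ℝ)
    (h α Tm TM : ℝ) (hh : 0 < h)
    (V : (ℝ → EuclideanSpace ℝ (Fin n)) → ℝ) (μ₁ μ₂ : ℝ) (hμ₁ : 0 < μ₁) (hμ₂ : 0 < μ₂)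
    -- the sandwich bound `μ₁‖φ(0)‖² ≤ V(φ) ≤ μ₂‖φ‖²_W` for all `φ ∈ W[-h,0]`
    (hV : ∀ φ φ' : ℝ → EuclideanSpace ℝ (Fin n), InW h φ φ' →
      μ₁ * ‖φ 0‖ ^ 2 ≤ V φ ∧ V φ ≤ μ₂ * (Wnorm h φ φ') ^ 2)
    (𝒱 : ℕ → ℝ → (ℝ → ℝ → EuclideanSpace ℝ (Fin n)) → ℝ) (η : ℝ) (hη : 0 ≤ η)
    -- conditions (i)–(iv) along the lifted solutions, on each sampling interval
    (hcond : ∀ t : ℕ → ℝ, IsResetSeq Tm TM t →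
      ∀ φX φX' X : ℝ → EuclideanSpace ℝ (Fin n), InW h φX φX' →
        IsSampledSol Λ Λd K h t φX X →
        ∀ k : ℕ,
          -- (i) looping condition `e^{2αT_k} 𝒱_k(T_k, χ_k) = 𝒱_k(0, χ_k)`
          (Real.exp (2 * α * (t (k + 1) - t k)) *
              𝒱 k (t (k + 1) - t k) (fun τ θ => X (t k + τ + θ)) =
            𝒱 k 0 (fun τ θ => X (t k + τ + θ))) ∧
          -- (ii) `𝒱_k(0, χ_k) ≤ η V(χ_k(0,·))`
          (𝒱 k 0 (fun τ θ => X (t k + τ + θ)) ≤ η * V (fun θ => X (t k + θ))) ∧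
          -- (iii) `−η V(χ_k(0,·)) ≤ e^{2ατ} 𝒱_k(τ, χ_k)` on `[0, T_k]`
          (∀ τ ∈ Icc 0 (t (k + 1) - t k),
            -(η * V (fun θ => X (t k + θ))) ≤
              Real.exp (2 * α * τ) * 𝒱 k τ (fun τ' θ => X (t k + τ' + θ))) ∧
          -- (iv) `σ ↦ e^{2ασ}(V(χ_k(σ,·)) + 𝒱_k(σ, χ_k))` has nonpositive derivative
          (∀ σ ∈ Icc 0 (t (k + 1) - t k), ∃ d : ℝ, d ≤ 0 ∧
            HasDerivWithinAt
              (fun σ' => Real.exp (2 * α * σ') *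
                (V (fun θ => X (t k + σ' + θ)) + 𝒱 k σ' (fun τ' θ => X (t k + τ' + θ))))
              d (Icc 0 (t (k + 1) - t k)) σ)) :
    -- exponential stability with decay rate `α`
    ∀ ε > (0:ℝ), ∃ δ > (0:ℝ), ∀ t : ℕ → ℝ, IsResetSeq Tm TM t →
      ∀ φX φX' X : ℝ → EuclideanSpace ℝ (Fin n), InW h φX φX' →
        Wnorm h φX φX' < δ → IsSampledSol Λ Λd K h t φX X →
        ∀ s : ℝ, 0 ≤ s → ‖X s‖ < ε * Real.exp (-(α * s)) := by
  intro ε hε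
  refine ⟨ε * √(μ₁ / ((1 + 2 * η) * μ₂)), by positivity, ?_⟩
  intro t ht φX φX' X hφ hδ hX s hs
  have hcondX := hcond t ht φX φX' X hφ hX
  have hdecay : Real.exp (2 * α * s) * V (fun θ => X (s + θ)) ≤
      (1 + 2 * η) * V (fun θ => X (0 + θ)) :=
    exp_mul_le_of_looped (L := fun s => V fun θ => X (s + θ)) ht hη (fun k => (hcondX k).1)
      (fun k => (hcondX k).2.1) (fun k => (hcondX k).2.2.1) (fun k => (hcondX k).2.2.2) hs
  obtain ⟨ψ', hψ'⟩ := hX.exists_inW_segment ht hh.le hφ hs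
  have hinit : EqOn φX (fun θ => X (0 + θ)) (Icc (-h) 0) := fun θ hθ => by simp [hX.2.1 θ hθ]
  have hlow := (hV _ _ hψ').1
  have hup := (hV _ _ (hφ.congr hh.le hinit)).2
  rw [← Wnorm_congr hinit] at hup
  refine lt_mul_exp_neg_of_exp_mul_sq_le hμ₁ (by positivity) (Wnorm_nonneg hh.le) hδ ?_
  calc Real.exp (2 * α * s) * (μ₁ * ‖X s‖ ^ 2)
      ≤ Real.exp (2 * α * s) * V (fun θ => X (s + θ)) := by
        gcongr
        simpa using hlow
    _ ≤ (1 + 2 * η) * V (fun θ => X (0 + θ)) := hdecay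
    _ ≤ (1 + 2 * η) * (μ₂ * Wnorm h φX φX' ^ 2) := by gcongr
    _ = (1 + 2 * η) * μ₂ * Wnorm h φX φX' ^ 2 := by ring

/-- Proposition 2: exponential stability of the sampled-data system via a
Lyapunov–Krasovskii functional `V` and a family of looped functionals `𝒱_k`.
Here `𝒱 k τ χ` is the value of the functional `𝒱_k` at time `τ` on the lifted
function `χ = χ_k`, where `χ_k (τ, θ) = X (t_k + τ + θ)`. -/
theorem proposition2
    (n : ℕ) (Λ Λd K : Matrix (Fin n) (Fin n) ℝ)
    (h α Tm TM : ℝ) (hh : 0 < h) (hα : 0 < α) (hTm : 0 ≤ Tm) (hTM : Tm ≤ TM)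
    (V : (ℝ → EuclideanSpace ℝ (Fin n)) → ℝ) (μ₁ μ₂ : ℝ) (hμ₁ : 0 < μ₁) (hμ₂ : 0 < μ₂)
    -- the sandwich bound `μ₁‖φ(0)‖² ≤ V(φ) ≤ μ₂‖φ‖²_W` for all `φ ∈ W[-h,0]`
    (hV : ∀ φ φ' : ℝ → EuclideanSpace ℝ (Fin n), InW h φ φ' →
      μ₁ * ‖φ 0‖ ^ 2 ≤ V φ ∧ V φ ≤ μ₂ * (Wnorm h φ φ') ^ 2)
    (𝒱 : ℕ → ℝ → (ℝ → ℝ → EuclideanSpace ℝ (Fin n)) → ℝ) (η : ℝ) (hη : 0 ≤ η)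
    -- conditions (i)–(iv) along the lifted solutions, on each sampling interval
    (hcond : ∀ t : ℕ → ℝ, IsResetSeq Tm TM t →
      ∀ φX φX' X : ℝ → EuclideanSpace ℝ (Fin n), InW h φX φX' →
        IsSampledSol Λ Λd K h t φX X →
        ∀ k : ℕ,
          -- (i) looping condition `e^{2αT_k} 𝒱_k(T_k, χ_k) = 𝒱_k(0, χ_k)`
          (Real.exp (2 * α * (t (k + 1) - t k)) *
              𝒱 k (t (k + 1) - t k) (fun τ θ => X (t k + τ + θ)) =
            𝒱 k 0 (fun τ θ => X (t k + τ + θ))) ∧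
          -- (ii) `𝒱_k(0, χ_k) ≤ η V(χ_k(0,·))`
          (𝒱 k 0 (fun τ θ => X (t k + τ + θ)) ≤ η * V (fun θ => X (t k + θ))) ∧
          -- (iii) `−η V(χ_k(0,·)) ≤ e^{2ατ} 𝒱_k(τ, χ_k)` on `[0, T_k]`
          (∀ τ ∈ Icc 0 (t (k + 1) - t k),
            -(η * V (fun θ => X (t k + θ))) ≤
              Real.exp (2 * α * τ) * 𝒱 k τ (fun τ' θ => X (t k + τ' + θ))) ∧
          -- (iv) `σ ↦ e^{2ασ}(V(χ_k(σ,·)) + 𝒱_k(σ, χ_k))` has nonpositive derivative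
          (∀ σ ∈ Icc 0 (t (k + 1) - t k), ∃ d : ℝ, d ≤ 0 ∧
            HasDerivWithinAt
              (fun σ' => Real.exp (2 * α * σ') *
                (V (fun θ => X (t k + σ' + θ)) + 𝒱 k σ' (fun τ' θ => X (t k + τ' + θ))))
              d (Icc 0 (t (k + 1) - t k)) σ)) :
    -- exponential stability with decay rate `α`
    ∀ ε > (0:ℝ), ∃ δ > (0:ℝ), ∀ t : ℕ → ℝ, IsResetSeq Tm TM t →
      ∀ φX φX' X : ℝ → EuclideanSpace ℝ (Fin n), InW h φX φX' →
        Wnorm h φX φX' < δ → IsSampledSol Λ Λd K h t φX X →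
        ∀ s : ℝ, 0 ≤ s → ‖X s‖ < ε * Real.exp (-(α * s)) :=
  proposition2_general n Λ Λd K h α Tm TM hh V μ₁ μ₂ hμ₁ hμ₂ hV 𝒱 η hη hcond

end
end

section
/- (Input/output equivalence of the reset integrator and its sampled-data realization) Let u : ℝ → ℝ be continuous and let {t_k} be a reset sequence. Suppose x_ri : ℝ → ℝ satisfies, for each k ≥ 0: x_ri is differentiable on (t_k, t_{k+1}) with ẋ_ri(t) = u(t), x_ri is continuous from the left on (t_k, t_{k+1}], and lim_{t → t_k⁺} x_ri(t) = 0 (the reset to zero). Let x_s : ℝ → ℝ be defined by x_s(t) = x_s(0) + ∫₀ᵗ u(s) ds. Then for every k and every t ∈ (t_k, t_{k+1}], x_ri(t) = x_s(t) − x_s(t_k); in particular, the output y_ri(t) = x_ri(t) of the reset integrator coincides with the output y_s(t) = x_s(t) − x_s(t_k) of the sampled-data system for all t > 0. -/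
open Set Filter Topology

section

variable {E : Type*} [NormedAddCommGroup E] [NormedSpace ℝ E]

theorem eqOn_Ioc_of_hasDerivAt_of_tendsto_nhdsGT {f g f' : ℝ → E} {a b : ℝ} {c : E}
    (hf : ∀ s ∈ Ioo a b, HasDerivAt f (f' s) s) (hg : ∀ s ∈ Ioo a b, HasDerivAt g (f' s) s)
    (hfc : ContinuousOn f (Ioc a b)) (hgc : ContinuousOn g (Ioc a b))
    (hfa : Tendsto f (𝓝[>] a) (𝓝 c)) (hga : Tendsto g (𝓝[>] a) (𝓝 c)) :
    EqOn f g (Ioc a b) := by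
  intro τ ⟨haτ, hτb⟩
  have hconst : ∀ x ∈ Ioo a τ, f x - g x = f τ - g τ := by
    intro x ⟨hax, hxτ⟩
    have hsub : Icc x τ ⊆ Ioc a b := fun y hy => ⟨hax.trans_le hy.1, hy.2.trans hτb⟩
    refine (constant_of_has_deriv_right_zero ((hfc.sub hgc).mono hsub) (fun y hy => ?_) τ
      ⟨hxτ.le, le_rfl⟩).symm
    have hy' : y ∈ Ioo a b := ⟨hax.trans_le hy.1, hy.2.trans_le hτb⟩
    simpa using ((hf y hy').sub (hg y hy')).hasDerivWithinAt
  have hlim : Tendsto (fun x => f x - g x) (𝓝[>] a) (𝓝 (f τ - g τ)) :=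
    tendsto_const_nhds.congr' <|
      eventually_of_mem (Ioo_mem_nhdsGT haτ) fun x hx => (hconst x hx).symm
  have hτ : f τ - g τ = c - c := tendsto_nhds_unique hlim (hfa.sub hga)
  rwa [sub_self, sub_eq_zero] at hτ

end

theorem reset_integrator_sampled_data_equivalence_general
    (t : ℕ → ℝ)
    (u : ℝ → ℝ) (hu : Continuous u)
    (xri : ℝ → ℝ)
    (hode : ∀ k : ℕ, ∀ s ∈ Ioo (t k) (t (k + 1)), HasDerivAt xri (u s) s)
    (hleft : ∀ k : ℕ, ContinuousOn xri (Ioc (t k) (t (k + 1))))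
    (hreset : ∀ k : ℕ, Tendsto xri (nhdsWithin (t k) (Ioi (t k))) (nhds 0))
    (xs : ℝ → ℝ) (hxs : ∀ τ : ℝ, xs τ = xs 0 + ∫ s in (0:ℝ)..τ, u s) :
    ∀ k : ℕ, ∀ τ ∈ Ioc (t k) (t (k + 1)), xri τ = xs τ - xs (t k) := by
  intro k τ hτ
  have hxs_sub : xs τ - xs (t k) = ∫ s in (t k)..τ, u s := by
    rw [hxs τ, hxs (t k), add_sub_add_left_eq_sub,
      intervalIntegral.integral_interval_sub_left (hu.intervalIntegrable _ _)
        (hu.intervalIntegrable _ _)]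
  have hprim : ∀ x, HasDerivAt (fun τ => ∫ s in (t k)..τ, u s) (u x) x := fun x =>
    (hu.integral_hasStrictDerivAt (t k) x).hasDerivAt
  have hprim_cont : Continuous fun τ => ∫ s in (t k)..τ, u s :=
    continuous_iff_continuousAt.2 fun x => (hprim x).continuousAt
  have hprim_lim : Tendsto (fun τ => ∫ s in (t k)..τ, u s) (𝓝[>] (t k)) (𝓝 0) := by
    simpa using hprim_cont.continuousWithinAt (s := Ioi (t k)) (x := t k) |>.tendsto
  rw [hxs_sub]
  exact eqOn_Ioc_of_hasDerivAt_of_tendsto_nhdsGT (hode k) (fun s _ => hprim s) (hleft k)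
    hprim_cont.continuousOn (hreset k) hprim_lim hτ

/-- Input/output equivalence of the reset integrator and its sampled-data realization:
if `x_ri` satisfies `ẋ_ri = u` on each inter-reset interval, is left-continuous there and is
reset to `0` at each reset instant, and `x_s(t) = x_s(0) + ∫₀ᵗ u`, then
`x_ri(t) = x_s(t) − x_s(t_k)` on each `(t_k, t_{k+1}]`; in particular the output
`y_ri = x_ri` of the reset integrator coincides with the output `y_s(t) = x_s(t) − x_s(t_k)`
of the sampled-data system for all `t > 0`. -/
theorem reset_integrator_sampled_data_equivalence
    (Tm TM : ℝ) (hTm : 0 ≤ Tm) (hTM : Tm ≤ TM)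
    (t : ℕ → ℝ) (ht : IsResetSeq Tm TM t)
    (u : ℝ → ℝ) (hu : Continuous u)
    (xri : ℝ → ℝ)
    (hode : ∀ k : ℕ, ∀ s ∈ Ioo (t k) (t (k + 1)), HasDerivAt xri (u s) s)
    (hleft : ∀ k : ℕ, ContinuousOn xri (Ioc (t k) (t (k + 1))))
    (hreset : ∀ k : ℕ, Tendsto xri (nhdsWithin (t k) (Ioi (t k))) (nhds 0))
    (xs : ℝ → ℝ) (hxs : ∀ τ : ℝ, xs τ = xs 0 + ∫ s in (0:ℝ)..τ, u s) :
    ∀ k : ℕ, ∀ τ ∈ Ioc (t k) (t (k + 1)), xri τ = xs τ - xs (t k) :=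
  reset_integrator_sampled_data_equivalence_general t u hu xri hode hleft hreset xs hxs
end

section
/- (Weighted Bessel–Legendre integral inequality) Let h > 0, α ≥ 0, N ∈ ℕ, let R ∈ ℝ^{n×n} be symmetric positive semidefinite, and let g : [−h,0] → ℝⁿ be continuous. For j = 0,…,N set Ω_j = ∫_{−h}^0 L_j(s) g(s) ds, where L_j is the j-th Legendre polynomial shifted to [−h,0]. Then ∫_{−h}^0 e^{2αs} g(s)ᵀ R g(s) ds ≥ (e^{−2αh}/h) Σ_{j=0}^N (2j+1) Ω_jᵀ R Ω_j. -/
open Matrix Set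

/-- The `k`-th Legendre polynomial shifted to the interval `[−h, 0]`:
`L_k(s) = (−1)^k Σ_{l=0}^k (−1)^l C(k,l) C(k+l,l) ((s+h)/h)^l`. -/
noncomputable def LegendreShifted (h : ℝ) (k : ℕ) (s : ℝ) : ℝ :=
  (-1 : ℝ) ^ k * ∑ l ∈ Finset.range (k + 1),
    (-1 : ℝ) ^ l * (Nat.choose k l : ℝ) * (Nat.choose (k + l) l : ℝ) * ((s + h) / h) ^ l

/-!
On `[0, 1]`, Rodrigues' formula `k! P_k = D^k (X^k (1 - X)^k)` for the shifted Legendre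
polynomials and `k` integrations by parts give `∫ u P_k = 0` whenever `deg u < k` and, through
the Beta integral, `∫ P_k² = 1/(2k+1)`. Since `L_k(s) = P_k(-s/h)`, the `L_j` are orthogonal on
`[−h, 0]` with `∫ L_j² = h/(2j+1)`. Writing `R = Bᵀ B`, the form `gᵀ R g` is the sum of the
squares of the coordinates of `B g`, so Bessel's inequality in `L²[−h, 0]`, applied to each
coordinate, gives `Σ_j (2j+1) Ω_jᵀ R Ω_j ≤ h ∫ gᵀ R g`; on `[−h, 0]` the weight `e^{2αs}` is at
least `e^{−2αh}`.
-/

open MeasureTheory Polynomial Nat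

theorem integral_pow_mul_one_sub_pow (a b : ℕ) :
    ∫ x in (0 : ℝ)..1, x ^ a * (1 - x) ^ b = a ! * b ! / (a + b + 1)! := by
  have hB := Complex.betaIntegral_eq_Gamma_mul_div (a + 1) (b + 1)
    (by norm_cast; omega) (by norm_cast; omega)
  rw [show (a + 1 : ℂ) + (b + 1) = (a + b + 1 : ℕ) + 1 by push_cast; ring,
    Complex.Gamma_nat_eq_factorial, Complex.Gamma_nat_eq_factorial,
    Complex.Gamma_nat_eq_factorial, Complex.betaIntegral] at hB
  simp only [add_sub_cancel_right, Complex.cpow_natCast] at hB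
  apply Complex.ofReal_injective
  rw [← intervalIntegral.integral_ofReal]
  push_cast
  exact hB

namespace Polynomial

theorem integral_eval_mul_derivative_eq_neg (p q : ℝ[X]) (hq₀ : q.eval 0 = 0)
    (hq₁ : q.eval 1 = 0) :
    ∫ x in (0 : ℝ)..1, p.eval x * (derivative q).eval x =
      -∫ x in (0 : ℝ)..1, (derivative p).eval x * q.eval x := by
  rw [intervalIntegral.integral_mul_deriv_eq_deriv_mul (fun x _ => p.hasDerivAt x)
    (fun x _ => q.hasDerivAt x) ((derivative p).continuous.intervalIntegrable _ _)
    ((derivative q).continuous.intervalIntegrable _ _), hq₀, hq₁]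
  ring

theorem integral_eval_mul_iterate_derivative_eq (u Q : ℝ[X]) (k : ℕ)
    (hQ : ∀ i < k, (derivative^[i] Q).eval 0 = 0 ∧ (derivative^[i] Q).eval 1 = 0) :
    ∫ x in (0 : ℝ)..1, u.eval x * (derivative^[k] Q).eval x =
      (-1) ^ k * ∫ x in (0 : ℝ)..1, (derivative^[k] u).eval x * Q.eval x := by
  induction k generalizing u with
  | zero => simp
  | succ k ih =>
    obtain ⟨h₀, h₁⟩ := hQ k k.lt_succ_self
    rw [Function.iterate_succ_apply', integral_eval_mul_derivative_eq_neg _ _ h₀ h₁,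
      ih (derivative u) fun i hi => hQ i (by omega), Function.iterate_succ_apply, pow_succ]
    ring

theorem eval_iterate_derivative_X_pow_mul_one_sub_X_pow {k i : ℕ} (hi : i < k) :
    (derivative^[i] (X ^ k * (1 - X) ^ k : ℝ[X])).eval 0 = 0 ∧
      (derivative^[i] (X ^ k * (1 - X) ^ k : ℝ[X])).eval 1 = 0 := by
  obtain ⟨r, hr⟩ := pow_sub_dvd_iterate_derivative_pow (X * (1 - X) : ℝ[X]) k i
  rw [← mul_pow, hr]
  simp [zero_pow (Nat.sub_pos_of_lt hi).ne']

theorem eval_iterate_derivative_of_natDegree_le {R : Type*} [CommSemiring R] {p : R[X]} {k : ℕ}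
    (hp : p.natDegree ≤ k) (x : R) : (derivative^[k] p).eval x = k ! * p.coeff k := by
  rw [eq_C_of_natDegree_le_zero ((natDegree_iterate_derivative p k).trans (by omega)), eval_C,
    coeff_iterate_derivative, zero_add, descFactorial_self, nsmul_eq_mul]

theorem factorial_mul_map_shiftedLegendre (k : ℕ) :
    (k ! : ℝ[X]) * (shiftedLegendre k).map (algebraMap ℤ ℝ) =
      derivative^[k] (X ^ k * (1 - X) ^ k) := by
  have h := congrArg (map (algebraMap ℤ ℝ)) (factorial_mul_shiftedLegendre_eq k)
  rwa [← iterate_derivative_map, Polynomial.map_mul, Polynomial.map_natCast, Polynomial.map_mul,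
    Polynomial.map_pow, Polynomial.map_pow, Polynomial.map_sub, map_X, Polynomial.map_one] at h

theorem integral_eval_mul_aeval_shiftedLegendre {u : ℝ[X]} {k : ℕ} (hu : u.natDegree ≤ k) :
    ∫ x in (0 : ℝ)..1, u.eval x * aeval x (shiftedLegendre k) =
      (-1) ^ k * u.coeff k * (k ! ^ 2 / (2 * k + 1)!) := by
  have hk : (k ! : ℝ) ≠ 0 := by positivity
  have key := integral_eval_mul_iterate_derivative_eq u _ k
    fun _ => eval_iterate_derivative_X_pow_mul_one_sub_X_pow
  simp only [← factorial_mul_map_shiftedLegendre, eval_mul, eval_natCast,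
    eval_iterate_derivative_of_natDegree_le hu, eval_pow, eval_X, eval_sub, eval_one,
    eval_map_algebraMap] at key
  rw [intervalIntegral.integral_const_mul, integral_pow_mul_one_sub_pow,
    show k + k + 1 = 2 * k + 1 by ring] at key
  simp_rw [mul_left_comm (eval _ u), intervalIntegral.integral_const_mul] at key
  apply mul_left_cancel₀ hk
  rw [key]
  ring

theorem integral_aeval_shiftedLegendre_mul (j k : ℕ) :
    ∫ x in (0 : ℝ)..1, aeval x (shiftedLegendre j) * aeval x (shiftedLegendre k) =
      if j = k then 1 / (2 * (k : ℝ) + 1) else 0 := by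
  wlog hjk : j ≤ k generalizing j k
  · simp_rw [mul_comm (aeval _ (shiftedLegendre j))]
    rw [this k j (by omega), if_neg (by omega), if_neg (by omega)]
  have hdeg : ((shiftedLegendre j).map (algebraMap ℤ ℝ)).natDegree ≤ k := by
    rw [natDegree_map_eq_of_injective (RingHom.injective_int _)]
    simpa
  have h := integral_eval_mul_aeval_shiftedLegendre hdeg
  simp only [eval_map_algebraMap, coeff_map, coeff_shiftedLegendre] at h
  rw [h]
  rcases hjk.lt_or_eq with hlt | rfl
  · simp [choose_eq_zero_of_lt hlt, hlt.ne]
  · have hc : ((j + j).choose j : ℝ) * j ! ^ 2 = (j + j)! := by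
      rw [sq, ← mul_assoc]
      exact_mod_cast add_choose_mul_factorial_mul_factorial j j
    have hsign : ((-1 : ℝ) ^ j) * (-1) ^ j = 1 := by rw [← mul_pow]; norm_num
    rw [if_pos rfl, two_mul, factorial_succ]
    push_cast
    rw [choose_self, cast_one, mul_one, ← mul_assoc, hsign, one_mul, ← mul_div_assoc, hc]
    field_simp
    ring

end Polynomial

theorem legendreShifted_eq_aeval {h : ℝ} (hh : h ≠ 0) (k : ℕ) (s : ℝ) :
    LegendreShifted h k s = aeval (-s / h) (shiftedLegendre k) := by
  have hsign : LegendreShifted h k s = (-1) ^ k * aeval ((s + h) / h) (shiftedLegendre k) := by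
    rw [LegendreShifted, shiftedLegendre, map_sum]
    congr 1
    refine Finset.sum_congr rfl fun l _ => ?_
    simp [add_comm k l, choose_symm_add]
  rw [hsign, shiftedLegendre_eval_symm, ← mul_assoc, ← mul_pow, neg_one_mul, neg_neg, one_pow,
    one_mul, show 1 - (s + h) / h = -s / h by field_simp; ring]

theorem continuous_legendreShifted {h : ℝ} (hh : h ≠ 0) (k : ℕ) :
    Continuous (LegendreShifted h k) := by
  simp_rw [funext (legendreShifted_eq_aeval hh k)]
  fun_prop

theorem integral_legendreShifted_mul {h : ℝ} (hh : h ≠ 0) (j k : ℕ) :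
    ∫ s in (-h)..0, LegendreShifted h j s * LegendreShifted h k s =
      if j = k then h / (2 * k + 1) else 0 := by
  simp_rw [legendreShifted_eq_aeval hh, neg_div, ← div_neg]
  rw [intervalIntegral.integral_comp_div (fun x => aeval x (shiftedLegendre j) *
    aeval x (shiftedLegendre k)) (neg_ne_zero.2 hh), div_self (neg_ne_zero.2 hh), zero_div,
    intervalIntegral.integral_symm, integral_aeval_shiftedLegendre_mul]
  split_ifs <;> simp [div_eq_mul_inv]

theorem MeasureTheory.MemLp.inner_toLp_toLp {α : Type*} [MeasurableSpace α] {μ : Measure α}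
    {f g : α → ℝ} (hf : MemLp f 2 μ) (hg : MemLp g 2 μ) :
    inner ℝ (hf.toLp f) (hg.toLp g) = ∫ x, f x * g x ∂μ := by
  rw [L2.inner_def]
  refine integral_congr_ae ?_
  filter_upwards [hf.coeFn_toLp, hg.coeFn_toLp] with x hfx hgx
  rw [hfx, hgx, real_inner_eq_re_inner, RCLike.inner_apply, conj_trivial, mul_comm]
  rfl

theorem sum_integral_mul_sq_div_le_integral_sq {α ι : Type*} [MeasurableSpace α]
    {μ : Measure α} [DecidableEq ι] {e : ι → α → ℝ} {c : ι → ℝ} (he : ∀ i, MemLp (e i) 2 μ)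
    (hc : ∀ i, 0 < c i)
    (horth : ∀ i j, ∫ x, e i x * e j x ∂μ = if i = j then c i else 0)
    (s : Finset ι) {f : α → ℝ} (hf : MemLp f 2 μ) :
    ∑ i ∈ s, (∫ x, e i x * f x ∂μ) ^ 2 / c i ≤ ∫ x, f x ^ 2 ∂μ := by
  set v : ι → Lp ℝ 2 μ := fun i => (√(c i))⁻¹ • (he i).toLp with hv
  have hon : Orthonormal ℝ v := by
    rw [orthonormal_iff_ite]
    intro i j
    simp only [hv, real_inner_smul_left, real_inner_smul_right, MemLp.inner_toLp_toLp, horth]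
    split_ifs with hij
    · subst hij
      rw [← mul_assoc, ← mul_inv, Real.mul_self_sqrt (hc i).le, inv_mul_cancel₀ (hc i).ne']
    · simp
  have hb := hon.sum_inner_products_le (s := s) (hf.toLp f)
  rw [← real_inner_self_eq_norm_sq, MemLp.inner_toLp_toLp] at hb
  convert hb using 2 with i hi
  · rw [Real.norm_eq_abs, sq_abs, hv, real_inner_smul_left, MemLp.inner_toLp_toLp, mul_pow,
      inv_pow, Real.sq_sqrt (hc i).le]
    ring
  · simp [sq]

theorem ContinuousOn.memLp_restrict {X E : Type*} [TopologicalSpace X] [MeasurableSpace X]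
    [OpensMeasurableSpace X] [T2Space X] {μ : Measure X} [IsFiniteMeasureOnCompacts μ]
    [NormedAddCommGroup E] {f : X → E} {s : Set X} (hs : IsCompact s) (hf : ContinuousOn f s)
    (p : ENNReal) : MemLp f p (μ.restrict s) := by
  have : IsFiniteMeasure (μ.restrict s) := isFiniteMeasure_restrict.2 hs.measure_lt_top.ne
  obtain ⟨C, hC⟩ := hs.exists_bound_of_continuousOn hf
  exact .of_bound (hf.aestronglyMeasurable_of_isCompact hs hs.measurableSet) C
    ((ae_restrict_iff' hs.measurableSet).2 (.of_forall hC))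

theorem sum_integral_legendreShifted_mul_sq_le {h : ℝ} (hh : 0 < h) (N : ℕ) {f : ℝ → ℝ}
    (hf : ContinuousOn f (Icc (-h) 0)) :
    ∑ j ∈ Finset.range (N + 1),
        (2 * (j : ℝ) + 1) * (∫ s in (-h)..0, LegendreShifted h j s * f s) ^ 2
      ≤ h * ∫ s in (-h)..0, f s ^ 2 := by
  have hle : -h ≤ 0 := by linarith
  have hmem : ∀ {u : ℝ → ℝ}, ContinuousOn u (Icc (-h) 0) →
      MemLp u 2 (volume.restrict (Ioc (-h) 0)) := fun hu =>
    (hu.memLp_restrict isCompact_Icc 2).mono_measure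
      (Measure.restrict_mono Ioc_subset_Icc_self le_rfl)
  have hb := sum_integral_mul_sq_div_le_integral_sq
    (fun j => hmem (continuous_legendreShifted hh.ne' j).continuousOn)
    (c := fun j : ℕ => h / (2 * j + 1)) (fun j => by positivity)
    (fun i j => by
      rw [← intervalIntegral.integral_of_le hle, integral_legendreShifted_mul hh.ne']
      split_ifs with hij <;> simp [hij])
    (Finset.range (N + 1)) (hmem hf)
  simp only [← intervalIntegral.integral_of_le hle, div_div_eq_mul_div] at hb
  rw [← Finset.sum_div, div_le_iff₀ hh, mul_comm _ h] at hb
  simpa only [mul_comm (2 * (_ : ℝ) + 1)] using hb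

open scoped MatrixOrder in
theorem Matrix.PosSemidef.exists_dotProduct_mulVec_eq_sum_sq {n : Type*} [Fintype n]
    {R : Matrix n n ℝ} (hR : R.PosSemidef) :
    ∃ B : Matrix n n ℝ, ∀ x, x ⬝ᵥ R *ᵥ x = ∑ i, (B *ᵥ x) i ^ 2 := by
  classical
  obtain ⟨B, rfl⟩ := CStarAlgebra.nonneg_iff_eq_star_mul_self.mp hR.nonneg
  refine ⟨B, fun x => ?_⟩
  rw [← mulVec_mulVec, dotProduct_mulVec, star_eq_conjTranspose,
    conjTranspose_eq_transpose_of_trivial, vecMul_transpose]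
  simp [dotProduct, sq]

theorem Matrix.mulVec_intervalIntegral_apply {m n : Type*} [Fintype n] (B : Matrix m n ℝ)
    {g : ℝ → n → ℝ} {a b : ℝ} (hg : IntervalIntegrable g volume a b) (i : m) :
    (B *ᵥ ∫ x in a..b, g x) i = ∫ x in a..b, (B *ᵥ g x) i :=
  ((LinearMap.proj i ∘ₗ B.mulVecLin).toContinuousLinearMap.intervalIntegral_comp_comm hg).symm

theorem bessel_legendre_inequality {n : ℕ} (N : ℕ) {h : ℝ} (hh : 0 < h)
    {R : Matrix (Fin n) (Fin n) ℝ} (hR : R.PosSemidef)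
    {g : ℝ → (Fin n → ℝ)} (hg : ContinuousOn g (Icc (-h) 0)) :
    ∑ j ∈ Finset.range (N + 1), (2 * (j : ℝ) + 1) *
        ((∫ s in (-h)..0, LegendreShifted h j s • g s) ⬝ᵥ
          R *ᵥ (∫ s in (-h)..0, LegendreShifted h j s • g s))
      ≤ h * ∫ s in (-h)..0, g s ⬝ᵥ R *ᵥ g s := by
  obtain ⟨B, hB⟩ := hR.exists_dotProduct_mulVec_eq_sum_sq
  have hcoeff : ∀ (j : ℕ) i, (B *ᵥ ∫ s in (-h)..0, LegendreShifted h j s • g s) i =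
      ∫ s in (-h)..0, LegendreShifted h j s * (B *ᵥ g s) i := fun j i => by
    rw [mulVec_intervalIntegral_apply (g := fun s => LegendreShifted h j s • g s) _
      (((continuous_legendreShifted hh.ne' j).continuousOn.smul hg).intervalIntegrable_of_Icc
        (by linarith))]
    simp [mulVec_smul]
  calc _ = ∑ i, ∑ j ∈ Finset.range (N + 1),
          (2 * (j : ℝ) + 1) * (∫ s in (-h)..0, LegendreShifted h j s * (B *ᵥ g s) i) ^ 2 := by
        simp_rw [hB, hcoeff, Finset.mul_sum]
        exact Finset.sum_comm
    _ ≤ ∑ i, h * ∫ s in (-h)..0, (B *ᵥ g s) i ^ 2 :=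
        Finset.sum_le_sum fun i _ => sum_integral_legendreShifted_mul_sq_le hh N (by fun_prop)
    _ = h * ∫ s in (-h)..0, g s ⬝ᵥ R *ᵥ g s := by
        rw [← Finset.mul_sum, ← intervalIntegral.integral_finsetSum fun i _ =>
          (ContinuousOn.intervalIntegrable_of_Icc (by linarith) (by fun_prop))]
        simp_rw [hB]

theorem mul_integral_le_integral_mul_of_monotoneOn {a b : ℝ} (hab : a ≤ b) {w f : ℝ → ℝ}
    (hw : MonotoneOn w (Icc a b)) (hf : ∀ x ∈ Icc a b, 0 ≤ f x)
    (hf_int : IntervalIntegrable f volume a b)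
    (hwf_int : IntervalIntegrable (fun x => w x * f x) volume a b) :
    w a * ∫ x in a..b, f x ≤ ∫ x in a..b, w x * f x := by
  rw [← intervalIntegral.integral_const_mul]
  refine intervalIntegral.integral_mono_on hab (hf_int.const_mul _) hwf_int fun x hx => ?_
  exact mul_le_mul_of_nonneg_right (hw (left_mem_Icc.2 hab) hx hx.1) (hf x hx)

/-- Weighted Bessel–Legendre integral inequality:
`∫_{−h}^0 e^{2αs} g(s)ᵀ R g(s) ds ≥ (e^{−2αh}/h) Σ_{j=0}^N (2j+1) Ω_jᵀ R Ω_j`,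
where `Ω_j = ∫_{−h}^0 L_j(s) g(s) ds`. -/
theorem weighted_bessel_legendre_inequality
    (n N : ℕ) (h α : ℝ) (hh : 0 < h) (hα : 0 ≤ α)
    (R : Matrix (Fin n) (Fin n) ℝ) (hR : R.PosSemidef)
    (g : ℝ → (Fin n → ℝ)) (hg : ContinuousOn g (Icc (-h) 0)) :
    (Real.exp (-(2 * α * h)) / h) * ∑ j ∈ Finset.range (N + 1), (2 * (j : ℝ) + 1) *
        ((∫ s in (-h)..0, LegendreShifted h j s • g s) ⬝ᵥ
          R.mulVec (∫ s in (-h)..0, LegendreShifted h j s • g s))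
      ≤ ∫ s in (-h)..0, Real.exp (2 * α * s) * (g s ⬝ᵥ R.mulVec (g s)) := by
  have hle : -h ≤ 0 := by linarith
  have hquad : ContinuousOn (fun s => g s ⬝ᵥ R *ᵥ g s) (Icc (-h) 0) := by fun_prop
  have hweighted : ContinuousOn (fun s => Real.exp (2 * α * s) * (g s ⬝ᵥ R *ᵥ g s))
      (Icc (-h) 0) := by fun_prop
  have hweight : MonotoneOn (fun s => Real.exp (2 * α * s)) (Icc (-h) 0) := fun _ _ _ _ hxy =>
    Real.exp_le_exp.2 (mul_le_mul_of_nonneg_left hxy (by positivity))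
  calc _ ≤ Real.exp (-(2 * α * h)) / h * (h * ∫ s in (-h)..0, g s ⬝ᵥ R *ᵥ g s) :=
        mul_le_mul_of_nonneg_left (bessel_legendre_inequality N hh hR hg) (by positivity)
    _ = Real.exp (2 * α * -h) * ∫ s in (-h)..0, g s ⬝ᵥ R *ᵥ g s := by
        field_simp
    _ ≤ _ := mul_integral_le_integral_mul_of_monotoneOn hle hweight
        (fun s _ => by simpa using hR.dotProduct_mulVec_nonneg (g s))
        (hquad.intervalIntegrable_of_Icc hle) (hweighted.intervalIntegrable_of_Icc hle)
end

section
/- (Single-interval contraction via a looped functional) Let α > 0, η ≥ 0, T > 0, and let V, 𝒱 : [0,T] → ℝ be functions such that: (i) the map σ ↦ e^{2ασ}( V(σ) + 𝒱(σ) ) is nonincreasing on [0,T]; (ii) e^{2αT} 𝒱(T) = 𝒱(0); (iii) 𝒱(0) ≤ η V(0); (iv) −η V(0) ≤ e^{2ατ} 𝒱(τ) for all τ ∈ [0,T]. Then V(τ) ≤ (1 + 2η) e^{−2ατ} V(0) for all τ ∈ [0,T], and V(T) ≤ e^{−2αT} V(0). -/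
open Set

/-!
Evaluate the nonincreasing weighted functional at `0` and at `τ`. The `𝒱`-terms are bounded by
`η V(0)` at both ends, which costs the factor `1 + 2η`; at `τ = T` the looping condition makes
them cancel exactly, giving the sharp decay.
-/

namespace Real

theorem le_exp_neg_mul_of_exp_mul_le {a x y : ℝ} (h : exp a * x ≤ y) : x ≤ exp (-a) * y := by
  rwa [exp_neg, ← div_eq_inv_mul, le_div_iff₀ (exp_pos a), mul_comm]

end Real

theorem exp_mul_add_le_of_antitoneOn {α T τ : ℝ} {V 𝒱 : ℝ → ℝ}
    (hmono : AntitoneOn (fun σ => Real.exp (2 * α * σ) * (V σ + 𝒱 σ)) (Icc 0 T))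
    (hτ : τ ∈ Icc 0 T) :
    Real.exp (2 * α * τ) * V τ + Real.exp (2 * α * τ) * 𝒱 τ ≤ V 0 + 𝒱 0 := by
  have h := hmono ⟨le_rfl, hτ.1.trans hτ.2⟩ hτ hτ.1
  simpa only [mul_zero, Real.exp_zero, one_mul, mul_add] using h

theorem single_interval_contraction_general (α η T : ℝ) (hT : 0 < T)
    (V 𝒱 : ℝ → ℝ)
    (hmono : AntitoneOn (fun σ => Real.exp (2 * α * σ) * (V σ + 𝒱 σ)) (Icc 0 T))
    (hloop : Real.exp (2 * α * T) * 𝒱 T = 𝒱 0)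
    (h0 : 𝒱 0 ≤ η * V 0)
    (hlow : ∀ τ ∈ Icc 0 T, -(η * V 0) ≤ Real.exp (2 * α * τ) * 𝒱 τ) :
    (∀ τ ∈ Icc 0 T, V τ ≤ (1 + 2 * η) * Real.exp (-(2 * α * τ)) * V 0) ∧
      V T ≤ Real.exp (-(2 * α * T)) * V 0 := by
  refine ⟨fun τ hτ => ?_, ?_⟩
  · have hτ_le := exp_mul_add_le_of_antitoneOn hmono hτ
    have hτ_low := hlow τ hτ
    rw [mul_comm (1 + 2 * η), mul_assoc]
    apply Real.le_exp_neg_mul_of_exp_mul_le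
    linarith
  · have hT_le := exp_mul_add_le_of_antitoneOn hmono ⟨hT.le, le_rfl⟩
    apply Real.le_exp_neg_mul_of_exp_mul_le
    linarith

/-- Single-interval contraction via a looped functional: if
`σ ↦ e^{2ασ}(V(σ) + 𝒱(σ))` is nonincreasing on `[0,T]`, `e^{2αT}𝒱(T) = 𝒱(0)`,
`𝒱(0) ≤ η V(0)` and `−η V(0) ≤ e^{2ατ}𝒱(τ)` on `[0,T]`, then
`V(τ) ≤ (1+2η)e^{−2ατ}V(0)` on `[0,T]` and `V(T) ≤ e^{−2αT}V(0)`. -/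
theorem single_interval_contraction (α η T : ℝ) (hα : 0 < α) (hη : 0 ≤ η) (hT : 0 < T)
    (V 𝒱 : ℝ → ℝ)
    (hmono : AntitoneOn (fun σ => Real.exp (2 * α * σ) * (V σ + 𝒱 σ)) (Icc 0 T))
    (hloop : Real.exp (2 * α * T) * 𝒱 T = 𝒱 0)
    (h0 : 𝒱 0 ≤ η * V 0)
    (hlow : ∀ τ ∈ Icc 0 T, -(η * V 0) ≤ Real.exp (2 * α * τ) * 𝒱 τ) :
    (∀ τ ∈ Icc 0 T, V τ ≤ (1 + 2 * η) * Real.exp (-(2 * α * τ)) * V 0) ∧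
      V T ≤ Real.exp (-(2 * α * T)) * V 0 :=
  single_interval_contraction_general α η T hT V 𝒱 hmono hloop h0 hlow
end
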